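/- Let n ≥ 4, let C be a trace-free Weyl candidate on ℝⁿ, and let u ∈ ℝⁿ be unit timelike. Write u_a := (ηu)_a. Then C is purely magnetic with respect to u (θ_u·C = −C) if and only if the Bel–Debever condition u_{[a}C_{bc][de}u_{f]} = 0 holds for all indices a, b, c, d, e, f; explicitly, Σ over the three cyclic permutations (a,b,c) of the first index triple and the three cyclic permutations (d,e,f) of the second index triple of the nine terms u_{a'} C_{b'c'd'e'} u_{f'} equals zero. -/
import Mathlib


open Matrix

noncomputable section

/-- The Minkowski metric `η = diag(-1, 1, …, 1)` on `ℝⁿ`. -/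
def eta (n : ℕ) : Matrix (Fin n) (Fin n) ℝ :=
  Matrix.diagonal fun i => if i.val = 0 then (-1 : ℝ) else 1

/-- The reflection `θ_u = I + 2u(ηu)ᵀ` sending `u ↦ -u` and fixing `u^⊥`. -/
def theta {n : ℕ} (u : Fin n → ℝ) : Matrix (Fin n) (Fin n) ℝ :=
  1 + (2 : ℝ) • vecMulVec u ((eta n).mulVec u)

/-- The pullback action of a matrix `Λ` on rank-4 covariant tensors. -/
def pull {n : ℕ} (Λ : Matrix (Fin n) (Fin n) ℝ)
    (C : Fin n → Fin n → Fin n → Fin n → ℝ) : Fin n → Fin n → Fin n → Fin n → ℝ :=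
  fun a b c d => ∑ a', ∑ b', ∑ c', ∑ d',
    C a' b' c' d' * Λ a' a * Λ b' b * Λ c' c * Λ d' d

variable {n : ℕ}

lemma theta_apply (u : Fin n → ℝ) (i j : Fin n) :
    theta u i j = (if i = j then (1:ℝ) else 0) + 2 * (u i * (eta n).mulVec u j) := by
  simp [theta, Matrix.add_apply, Matrix.one_apply, Matrix.smul_apply, vecMulVec_apply]
  try ring

lemma sum_theta (u : Fin n → ℝ) (g : Fin n → ℝ) (j : Fin n) :
    ∑ i, g i * theta u i j = g j + 2 * (eta n).mulVec u j * ∑ i, u i * g i := by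
  have h : ∀ i, g i * theta u i j
      = (if i = j then g i else 0) + 2 * (eta n).mulVec u j * (u i * g i) := by
    intro i
    rw [theta_apply]
    by_cases h : i = j <;> simp [h] <;> ring
  simp only [h, Finset.sum_add_distrib, Finset.sum_ite_eq', Finset.mem_univ, if_true,
    ← Finset.mul_sum]

/-- Contraction of `u` into the first slot of `C`. -/
def Ac (u : Fin n → ℝ) (C : Fin n → Fin n → Fin n → Fin n → ℝ) (b c d : Fin n) : ℝ :=
  ∑ x, u x * C x b c d

/-- Double contraction of `u` into the first and third slots of `C`. -/
def Ec (u : Fin n → ℝ) (C : Fin n → Fin n → Fin n → Fin n → ℝ) (b d : Fin n) : ℝ :=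
  ∑ x, ∑ y, u x * u y * C x b y d

section Contractions
variable (u : Fin n → ℝ) (C : Fin n → Fin n → Fin n → Fin n → ℝ)
variable (hanti1 : ∀ a b c d, C b a c d = -C a b c d)
variable (hanti2 : ∀ a b c d, C a b d c = -C a b c d)
variable (hpair : ∀ a b c d, C c d a b = C a b c d)

include hanti1 in
lemma con2 (p r s : Fin n) : ∑ x, u x * C p x r s = -Ac u C p r s := by
  rw [Ac, ← Finset.sum_neg_distrib]
  refine Finset.sum_congr rfl fun x _ => ?_
  rw [show C p x r s = -C x p r s from hanti1 x p r s]; ring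

include hpair in
lemma con3 (p q s : Fin n) : ∑ x, u x * C p q x s = Ac u C s p q := by
  rw [Ac]
  exact Finset.sum_congr rfl fun x _ => by rw [show C p q x s = C x s p q from (hpair p q x s).symm]

include hpair hanti1 in
lemma con4 (p q r : Fin n) : ∑ x, u x * C p q r x = -Ac u C r p q := by
  rw [Ac, ← Finset.sum_neg_distrib]
  refine Finset.sum_congr rfl fun x _ => ?_
  rw [show C p q r x = -C x r p q by rw [← hpair p q r x]; exact hanti1 x r p q]; ring

include hanti1 in
lemma zero12 (r s : Fin n) : ∑ x, ∑ y, u x * u y * C x y r s = 0 := by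
  have h : (∑ x, ∑ y, u x * u y * C x y r s) = -(∑ x, ∑ y, u x * u y * C x y r s) := by
    calc (∑ x, ∑ y, u x * u y * C x y r s) = ∑ y, ∑ x, u x * u y * C x y r s :=
            Finset.sum_comm
      _ = ∑ x, ∑ y, -(u x * u y * C x y r s) := by
            refine Finset.sum_congr rfl fun y _ => Finset.sum_congr rfl fun x _ => ?_
            rw [hanti1]; ring
      _ = -(∑ x, ∑ y, u x * u y * C x y r s) := by
            simp [Finset.sum_neg_distrib]
  linarith

include hanti2 in
lemma zero34 (p q : Fin n) : ∑ x, ∑ y, u x * u y * C p q x y = 0 := by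
  have h : (∑ x, ∑ y, u x * u y * C p q x y) = -(∑ x, ∑ y, u x * u y * C p q x y) := by
    calc (∑ x, ∑ y, u x * u y * C p q x y) = ∑ y, ∑ x, u x * u y * C p q x y :=
            Finset.sum_comm
      _ = ∑ x, ∑ y, -(u x * u y * C p q x y) := by
            refine Finset.sum_congr rfl fun y _ => Finset.sum_congr rfl fun x _ => ?_
            rw [hanti2]; ring
      _ = -(∑ x, ∑ y, u x * u y * C p q x y) := by
            simp [Finset.sum_neg_distrib]
  linarith

include hanti1 in
lemma dAc1 (r s : Fin n) : ∑ x, u x * Ac u C x r s = 0 := by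
  have h : ∀ x, u x * Ac u C x r s = ∑ y, u y * u x * C y x r s := by
    intro x; rw [Ac, Finset.mul_sum]
    exact Finset.sum_congr rfl fun y _ => by ring
  simp only [h]
  rw [Finset.sum_comm]
  exact zero12 u C hanti1 r s

lemma dAc2 (p s : Fin n) : ∑ x, u x * Ac u C p x s = Ec u C p s := by
  have h : ∀ x, u x * Ac u C p x s = ∑ y, u y * u x * C y p x s := by
    intro x; rw [Ac, Finset.mul_sum]
    exact Finset.sum_congr rfl fun y _ => by ring
  simp only [h]
  rw [Finset.sum_comm, Ec]

include hanti2 in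
lemma dAc3 (p q : Fin n) : ∑ x, u x * Ac u C p q x = -Ec u C p q := by
  have h : ∀ x, u x * Ac u C p q x = ∑ y, u y * u x * C y p q x := by
    intro x; rw [Ac, Finset.mul_sum]
    exact Finset.sum_congr rfl fun y _ => by ring
  simp only [h]
  rw [Finset.sum_comm, Ec, ← Finset.sum_neg_distrib]
  refine Finset.sum_congr rfl fun y _ => ?_
  rw [← Finset.sum_neg_distrib]
  refine Finset.sum_congr rfl fun x _ => ?_
  rw [hanti2 y p x q]; ring

include hanti2 in
lemma dEc1 (p : Fin n) : ∑ x, u x * Ec u C p x = 0 := by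
  have h : ∀ x, u x * Ec u C p x = ∑ a, u a * ∑ y, u y * u x * C a p y x := by
    intro x; rw [Ec, Finset.mul_sum]
    refine Finset.sum_congr rfl fun a _ => ?_
    rw [Finset.mul_sum, Finset.mul_sum]
    exact Finset.sum_congr rfl fun y _ => by ring
  simp only [h]
  rw [Finset.sum_comm]
  have h2 : ∀ a, ∑ x, u a * ∑ y, u y * u x * C a p y x = 0 := by
    intro a
    have h3 : ∑ x, ∑ y, u y * u x * C a p y x = 0 := by
      rw [Finset.sum_comm]
      exact zero34 u C hanti2 a p
    rw [← Finset.mul_sum, h3, mul_zero]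
  simp only [h2, Finset.sum_const_zero]

include hanti1 in
lemma dEc2 (p : Fin n) : ∑ x, u x * Ec u C x p = 0 := by
  have key : ∀ y, ∑ x, ∑ a, u x * (u a * u y * C a x y p) = 0 := by
    intro y
    rw [Finset.sum_comm]
    have hz := zero12 u C hanti1 y p
    calc ∑ a, ∑ x, u x * (u a * u y * C a x y p)
        = ∑ a, ∑ x, u y * (u a * u x * C a x y p) :=
          Finset.sum_congr rfl fun a _ => Finset.sum_congr rfl fun x _ => by ring
      _ = u y * ∑ a, ∑ x, u a * u x * C a x y p := by
          simp only [Finset.mul_sum]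
      _ = 0 := by rw [hz, mul_zero]
  calc ∑ x, u x * Ec u C x p
      = ∑ x, ∑ a, ∑ y, u x * (u a * u y * C a x y p) := by
        refine Finset.sum_congr rfl fun x _ => ?_
        rw [Ec, Finset.mul_sum]
        exact Finset.sum_congr rfl fun a _ => by rw [Finset.mul_sum]
    _ = ∑ x, ∑ y, ∑ a, u x * (u a * u y * C a x y p) :=
        Finset.sum_congr rfl fun x _ => Finset.sum_comm
    _ = ∑ y, ∑ x, ∑ a, u x * (u a * u y * C a x y p) := Finset.sum_comm
    _ = 0 := by simp only [key, Finset.sum_const_zero]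

include hpair in
lemma Esymm (b d : Fin n) : Ec u C b d = Ec u C d b := by
  rw [Ec, Ec, Finset.sum_comm]
  refine Finset.sum_congr rfl fun y _ => Finset.sum_congr rfl fun x _ => ?_
  rw [show C y d x b = C x b y d from hpair x b y d]; ring

include hanti1 in
lemma double23 (p s : Fin n) : ∑ x, ∑ y, u x * u y * C p x y s = -Ec u C p s := by
  rw [Ec, ← Finset.sum_neg_distrib]
  refine Finset.sum_congr rfl fun x _ => ?_
  rw [← Finset.sum_neg_distrib]
  refine Finset.sum_congr rfl fun y _ => ?_
  rw [hanti1 x p y s]; ring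

include hanti1 hanti2 in
lemma double24 (p r : Fin n) : ∑ x, ∑ y, u x * u y * C p x r y = Ec u C p r := by
  rw [Ec]
  refine Finset.sum_congr rfl fun x _ => Finset.sum_congr rfl fun y _ => ?_
  rw [show C p x r y = C x p y r by rw [hanti1 x p r y, hanti2 x p y r]; ring]

include hanti2 in
lemma double14 (p s : Fin n) : ∑ x, ∑ y, u x * u y * C x p s y = -Ec u C p s := by
  rw [Ec, ← Finset.sum_neg_distrib]
  refine Finset.sum_congr rfl fun x _ => ?_
  rw [← Finset.sum_neg_distrib]
  refine Finset.sum_congr rfl fun y _ => ?_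
  rw [hanti2 x p y s]; ring

end Contractions

section EtaFacts
variable (u : Fin n → ℝ)

lemma eta_mulVec (x : Fin n) :
    (eta n).mulVec u x = (if x.val = 0 then (-1:ℝ) else 1) * u x := by
  simp [eta, Matrix.mulVec_diagonal]

lemma eps_w (x : Fin n) :
    (if x.val = 0 then (-1:ℝ) else 1) * (eta n).mulVec u x = u x := by
  rw [eta_mulVec]
  by_cases h : x.val = 0 <;> simp [h]

lemma eta_sum (X : Fin n → Fin n → ℝ) :
    ∑ a, ∑ c, eta n a c * X a c = ∑ a, (if a.val = 0 then (-1:ℝ) else 1) * X a a := by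
  refine Finset.sum_congr rfl fun a _ => ?_
  simp [eta, Matrix.diagonal_apply, ite_mul]

lemma eta_w (c : Fin n) : ∑ a, eta n a c * (eta n).mulVec u a = u c := by
  have h : ∀ a, eta n a c * (eta n).mulVec u a
      = if a = c then (if a.val = 0 then (-1:ℝ) else 1) * (eta n).mulVec u a else 0 := by
    intro a
    by_cases h : a = c <;> simp [eta, Matrix.diagonal_apply, h]
  simp only [h, Finset.sum_ite_eq', Finset.mem_univ, if_true, eps_w]

end EtaFacts

/-- The fully spatially projected tensor (projection of `C` onto `u^⊥` in all slots). -/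
def CPt (u : Fin n → ℝ) (C : Fin n → Fin n → Fin n → Fin n → ℝ) (a b c d : Fin n) : ℝ :=
  C a b c d
  + (eta n).mulVec u a * Ac u C b c d - (eta n).mulVec u b * Ac u C a c d
  + (eta n).mulVec u c * Ac u C d a b - (eta n).mulVec u d * Ac u C c a b
  + (eta n).mulVec u a * (eta n).mulVec u c * Ec u C b d
  - (eta n).mulVec u a * (eta n).mulVec u d * Ec u C b c
  - (eta n).mulVec u b * (eta n).mulVec u c * Ec u C a d
  + (eta n).mulVec u b * (eta n).mulVec u d * Ec u C a c

section PullFormula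
variable (u : Fin n → ℝ) (C : Fin n → Fin n → Fin n → Fin n → ℝ)
variable (hanti1 : ∀ a b c d, C b a c d = -C a b c d)
variable (hanti2 : ∀ a b c d, C a b d c = -C a b c d)
variable (hpair : ∀ a b c d, C c d a b = C a b c d)

include hanti1 hanti2 hpair in
lemma pull_theta (a b c d : Fin n) :
    pull (theta u) C a b c d = 2 * CPt u C a b c d - C a b c d
      + 2 * ((eta n).mulVec u a * (eta n).mulVec u c * Ec u C b d - (eta n).mulVec u a * (eta n).mulVec u d * Ec u C b c
             - (eta n).mulVec u b * (eta n).mulVec u c * Ec u C a d + (eta n).mulVec u b * (eta n).mulVec u d * Ec u C a c) := by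
  have step1 : pull (theta u) C a b c d
      = ∑ a', (∑ b', (∑ c', (∑ d', C a' b' c' d' * theta u d' d) * theta u c' c)
          * theta u b' b) * theta u a' a := by
    simp only [pull, Finset.sum_mul]
    exact Finset.sum_congr rfl fun a' _ => Finset.sum_congr rfl fun b' _ =>
      Finset.sum_congr rfl fun c' _ => Finset.sum_congr rfl fun d' _ => by ring
  have h4 : ∀ a' b' c', ∑ d', C a' b' c' d' * theta u d' d
      = C a' b' c' d - 2 * (eta n).mulVec u d * Ac u C c' a' b' := by
    intro a' b' c'
    rw [sum_theta, con4 u C hanti1 hpair a' b' c']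
    ring
  have h3 : ∀ a' b', ∑ c', (C a' b' c' d - 2 * (eta n).mulVec u d * Ac u C c' a' b') * theta u c' c
      = C a' b' c d - 2 * (eta n).mulVec u d * Ac u C c a' b' + 2 * (eta n).mulVec u c * Ac u C d a' b' := by
    intro a' b'
    rw [sum_theta]
    have e1 : ∑ x, u x * (C a' b' x d - 2 * (eta n).mulVec u d * Ac u C x a' b') = Ac u C d a' b' := by
      have hx : ∀ x, u x * (C a' b' x d - 2 * (eta n).mulVec u d * Ac u C x a' b')
          = u x * C a' b' x d - 2 * (eta n).mulVec u d * (u x * Ac u C x a' b') := fun x => by ring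
      simp only [hx]
      rw [Finset.sum_sub_distrib, ← Finset.mul_sum, con3 u C hpair a' b' d,
        dAc1 u C hanti1 a' b']
      ring
    rw [e1]
    try ring
  have h2 : ∀ a', ∑ b', (C a' b' c d - 2 * (eta n).mulVec u d * Ac u C c a' b' + 2 * (eta n).mulVec u c * Ac u C d a' b')
        * theta u b' b
      = C a' b c d - 2 * (eta n).mulVec u d * Ac u C c a' b + 2 * (eta n).mulVec u c * Ac u C d a' b
        + 2 * (eta n).mulVec u b * (-(Ac u C a' c d) + 2 * (eta n).mulVec u d * Ec u C c a' - 2 * (eta n).mulVec u c * Ec u C d a') := by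
    intro a'
    rw [sum_theta]
    have e1 : ∑ x, u x * (C a' x c d - 2 * (eta n).mulVec u d * Ac u C c a' x + 2 * (eta n).mulVec u c * Ac u C d a' x)
        = -(Ac u C a' c d) + 2 * (eta n).mulVec u d * Ec u C c a' - 2 * (eta n).mulVec u c * Ec u C d a' := by
      have hx : ∀ x, u x * (C a' x c d - 2 * (eta n).mulVec u d * Ac u C c a' x + 2 * (eta n).mulVec u c * Ac u C d a' x)
          = u x * C a' x c d - 2 * (eta n).mulVec u d * (u x * Ac u C c a' x)
            + 2 * (eta n).mulVec u c * (u x * Ac u C d a' x) := fun x => by ring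
      simp only [hx]
      rw [Finset.sum_add_distrib, Finset.sum_sub_distrib, ← Finset.mul_sum, ← Finset.mul_sum,
        con2 u C hanti1 a' c d, dAc3 u C hanti2 c a', dAc3 u C hanti2 d a']
      ring
    rw [e1]
  have h1 : ∑ a', (C a' b c d - 2 * (eta n).mulVec u d * Ac u C c a' b + 2 * (eta n).mulVec u c * Ac u C d a' b
        + 2 * (eta n).mulVec u b * (-(Ac u C a' c d) + 2 * (eta n).mulVec u d * Ec u C c a' - 2 * (eta n).mulVec u c * Ec u C d a'))
        * theta u a' a
      = C a b c d - 2 * (eta n).mulVec u d * Ac u C c a b + 2 * (eta n).mulVec u c * Ac u C d a b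
        + 2 * (eta n).mulVec u b * (-(Ac u C a c d) + 2 * (eta n).mulVec u d * Ec u C c a - 2 * (eta n).mulVec u c * Ec u C d a)
        + 2 * (eta n).mulVec u a * (Ac u C b c d - 2 * (eta n).mulVec u d * Ec u C c b + 2 * (eta n).mulVec u c * Ec u C d b) := by
    rw [sum_theta]
    have e1 : ∑ x, u x * (C x b c d - 2 * (eta n).mulVec u d * Ac u C c x b + 2 * (eta n).mulVec u c * Ac u C d x b
          + 2 * (eta n).mulVec u b * (-(Ac u C x c d) + 2 * (eta n).mulVec u d * Ec u C c x - 2 * (eta n).mulVec u c * Ec u C d x))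
        = Ac u C b c d - 2 * (eta n).mulVec u d * Ec u C c b + 2 * (eta n).mulVec u c * Ec u C d b := by
      have hx : ∀ x, u x * (C x b c d - 2 * (eta n).mulVec u d * Ac u C c x b + 2 * (eta n).mulVec u c * Ac u C d x b
            + 2 * (eta n).mulVec u b * (-(Ac u C x c d) + 2 * (eta n).mulVec u d * Ec u C c x - 2 * (eta n).mulVec u c * Ec u C d x))
          = u x * C x b c d - 2 * (eta n).mulVec u d * (u x * Ac u C c x b) + 2 * (eta n).mulVec u c * (u x * Ac u C d x b)
            + 2 * (eta n).mulVec u b * (-(u x * Ac u C x c d) + 2 * (eta n).mulVec u d * (u x * Ec u C c x)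
              - 2 * (eta n).mulVec u c * (u x * Ec u C d x)) := fun x => by ring
      simp only [hx]
      rw [Finset.sum_add_distrib, Finset.sum_add_distrib, Finset.sum_sub_distrib,
        ← Finset.mul_sum, ← Finset.mul_sum, ← Finset.mul_sum]
      have hsplit : ∑ x, (-(u x * Ac u C x c d) + 2 * (eta n).mulVec u d * (u x * Ec u C c x)
            - 2 * (eta n).mulVec u c * (u x * Ec u C d x))
          = -(∑ x, u x * Ac u C x c d) + 2 * (eta n).mulVec u d * (∑ x, u x * Ec u C c x)
            - 2 * (eta n).mulVec u c * (∑ x, u x * Ec u C d x) := by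
        rw [Finset.sum_sub_distrib, Finset.sum_add_distrib, ← Finset.mul_sum, ← Finset.mul_sum,
          Finset.sum_neg_distrib]
      rw [hsplit, dAc1 u C hanti1 c d, dEc1 u C hanti2 c, dEc1 u C hanti2 d,
        dAc2 u C c b, dAc2 u C d b]
      show (∑ x, u x * C x b c d) - _ + _ + _ = _
      rw [show (∑ x, u x * C x b c d) = Ac u C b c d from rfl]
      ring
    rw [e1]
  rw [step1]
  simp only [h4]
  simp only [h3]
  simp only [h2]
  rw [h1]
  rw [Esymm u C hpair c a, Esymm u C hpair d a, Esymm u C hpair c b, Esymm u C hpair d b]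
  rw [CPt]
  ring

end PullFormula

section MainLemmas
variable (u : Fin n → ℝ) (C : Fin n → Fin n → Fin n → Fin n → ℝ)
variable (hanti1 : ∀ a b c d, C b a c d = -C a b c d)
variable (hanti2 : ∀ a b c d, C a b d c = -C a b c d)
variable (hpair : ∀ a b c d, C c d a b = C a b c d)

lemma helperFG (F G : Fin n → ℝ) (k : ℝ) :
    ∑ a, ∑ f, u a * u f * (F a * (G f * k))
      = (∑ a, u a * F a) * ((∑ f, u f * G f) * k) := by
  have h : ∀ a, ∑ f, u a * u f * (F a * (G f * k))
      = (u a * F a) * ((∑ f, u f * G f) * k) := by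
    intro a
    rw [Finset.sum_mul, Finset.mul_sum]
    exact Finset.sum_congr rfl fun f _ => by ring
  simp only [h]
  exact (Finset.sum_mul _ _ _).symm

lemma helperK (K : Fin n → Fin n → ℝ) (k : ℝ) :
    ∑ a, ∑ f, u a * u f * K a f * k = (∑ a, ∑ f, u a * u f * K a f) * k := by
  simp only [Finset.sum_mul]

include hanti1 in
lemma zt3 (q : Fin n) (k : ℝ) : ∑ a, ∑ c, u a * (u c * Ac u C a c q) * k = 0 := by
  have h : ∀ a, ∑ c, u a * (u c * Ac u C a c q) * k
      = (u a * Ec u C a q) * k := by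
    intro a
    rw [show (u a * Ec u C a q) * k = (∑ c, u c * Ac u C a c q) * (u a * k) by
      rw [dAc2 u C a q]; ring]
    rw [Finset.sum_mul]
    exact Finset.sum_congr rfl fun c _ => by ring
  simp only [h]
  rw [← Finset.sum_mul, dEc2 u C hanti1 q, zero_mul]

include hanti1 in
lemma zt5 (q : Fin n) (k : ℝ) : ∑ a, ∑ c, u c * (u a * Ac u C c a q) * k = 0 := by
  refine Finset.sum_eq_zero fun a _ => ?_
  have h : ∑ c, u c * (u a * Ac u C c a q) * k
      = (∑ c, u c * Ac u C c a q) * (u a * k) := by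
    rw [Finset.sum_mul]
    exact Finset.sum_congr rfl fun c _ => by ring
  rw [h, dAc1 u C hanti1 a q, zero_mul]

include hanti2 in
lemma zt7 (p : Fin n) (k : ℝ) :
    ∑ a, ∑ c, u a * (eta n).mulVec u a * (u c * Ec u C p c) * k = 0 := by
  refine Finset.sum_eq_zero fun a _ => ?_
  have h : ∑ c, u a * (eta n).mulVec u a * (u c * Ec u C p c) * k
      = (∑ c, u c * Ec u C p c) * (u a * (eta n).mulVec u a * k) := by
    rw [Finset.sum_mul]
    exact Finset.sum_congr rfl fun c _ => by ring
  rw [h, dEc1 u C hanti2 p, zero_mul]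

include hanti1 in
lemma zt8 (p : Fin n) (k : ℝ) :
    ∑ a, ∑ c, u c * (eta n).mulVec u c * (u a * Ec u C a p) * k = 0 := by
  have h : ∀ a, ∑ c, u c * (eta n).mulVec u c * (u a * Ec u C a p) * k
      = (u a * Ec u C a p) * ((∑ c, u c * (eta n).mulVec u c) * k) := by
    intro a
    rw [Finset.sum_mul, Finset.mul_sum]
    exact Finset.sum_congr rfl fun c _ => by ring
  simp only [h]
  rw [← Finset.sum_mul, dEc2 u C hanti1 p, zero_mul]

include hanti2 in
lemma zt9 (k : ℝ) : ∑ a, ∑ c, u a * (u c * Ec u C a c) * k = 0 := by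
  refine Finset.sum_eq_zero fun a _ => ?_
  have h : ∑ c, u a * (u c * Ec u C a c) * k
      = (∑ c, u c * Ec u C a c) * (u a * k) := by
    rw [Finset.sum_mul]
    exact Finset.sum_congr rfl fun c _ => by ring
  rw [h, dEc1 u C hanti2 a, zero_mul]

include hanti1 hanti2 hpair in
lemma trace_CPt (htracefree : ∀ b d, ∑ a, ∑ c, eta n a c * C a b c d = 0)
    (huw : ∑ x, u x * (eta n).mulVec u x = -1) (b d : Fin n) :
    ∑ a, ∑ c, eta n a c * CPt u C a b c d = Ec u C b d := by
  have heps : ∀ p q, ∑ a, (if a.val = 0 then (-1:ℝ) else 1) * C a p a q = 0 := by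
    intro p q
    have h := htracefree p q
    rwa [eta_sum] at h
  have htr23 : ∀ x q, ∑ a, (if a.val = 0 then (-1:ℝ) else 1) * C x a a q = 0 := by
    intro x q
    have h : ∀ a : Fin n, (if a.val = 0 then (-1:ℝ) else 1) * C x a a q
        = -((if a.val = 0 then (-1:ℝ) else 1) * C a x a q) := by
      intro a; rw [hanti1 a x a q]; ring
    simp only [h]
    rw [Finset.sum_neg_distrib, heps x q, neg_zero]
  have htr24 : ∀ x y, ∑ a, (if a.val = 0 then (-1:ℝ) else 1) * C x a y a = 0 := by
    intro x y
    have h : ∀ a : Fin n, (if a.val = 0 then (-1:ℝ) else 1) * C x a y a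
        = (if a.val = 0 then (-1:ℝ) else 1) * C a x a y := by
      intro a
      rw [show C x a y a = C a x a y by rw [hanti1 a x y a, hanti2 a x a y]; ring]
    simp only [h]
    exact heps x y
  rw [eta_sum]
  have hx : ∀ a : Fin n, (if a.val = 0 then (-1:ℝ) else 1) * CPt u C a b a d
      = (if a.val = 0 then (-1:ℝ) else 1) * C a b a d
        + u a * Ac u C b a d
        - (eta n).mulVec u b * ((if a.val = 0 then (-1:ℝ) else 1) * Ac u C a a d)
        + u a * Ac u C d a b
        - (eta n).mulVec u d * ((if a.val = 0 then (-1:ℝ) else 1) * Ac u C a a b)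
        + (u a * (eta n).mulVec u a) * Ec u C b d
        - (eta n).mulVec u d * (u a * Ec u C b a)
        - (eta n).mulVec u b * (u a * Ec u C a d)
        + (eta n).mulVec u b * (eta n).mulVec u d
            * ((if a.val = 0 then (-1:ℝ) else 1) * Ec u C a a) := by
    intro a
    rw [CPt]
    linear_combination (-(Ac u C b a d) - Ac u C d a b - (eta n).mulVec u a * Ec u C b d
      + (eta n).mulVec u d * Ec u C b a + (eta n).mulVec u b * Ec u C a d)
      * (eps_w u a).symm
  simp only [hx]
  have s3 : ∀ q, ∑ a, (if a.val = 0 then (-1:ℝ) else 1) * Ac u C a a q = 0 := by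
    intro q
    have h1 : ∀ a : Fin n, (if a.val = 0 then (-1:ℝ) else 1) * Ac u C a a q
        = ∑ x, u x * ((if a.val = 0 then (-1:ℝ) else 1) * C x a a q) := by
      intro a; rw [Ac, Finset.mul_sum]
      exact Finset.sum_congr rfl fun x _ => by ring
    simp only [h1]
    rw [Finset.sum_comm]
    refine Finset.sum_eq_zero fun x _ => ?_
    rw [← Finset.mul_sum, htr23 x q, mul_zero]
  have s9 : ∑ a, (if a.val = 0 then (-1:ℝ) else 1) * Ec u C a a = 0 := by
    have h1 : ∀ a : Fin n, (if a.val = 0 then (-1:ℝ) else 1) * Ec u C a a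
        = ∑ x, ∑ y, u x * u y * ((if a.val = 0 then (-1:ℝ) else 1) * C x a y a) := by
      intro a; rw [Ec, Finset.mul_sum]
      refine Finset.sum_congr rfl fun x _ => ?_
      rw [Finset.mul_sum]
      exact Finset.sum_congr rfl fun y _ => by ring
    simp only [h1]
    rw [Finset.sum_comm]
    refine Finset.sum_eq_zero fun x _ => ?_
    rw [Finset.sum_comm]
    refine Finset.sum_eq_zero fun y _ => ?_
    rw [← Finset.mul_sum, htr24 x y, mul_zero]
  simp only [Finset.sum_add_distrib, Finset.sum_sub_distrib]
  rw [← Finset.mul_sum, ← Finset.mul_sum, ← Finset.mul_sum, ← Finset.mul_sum, ← Finset.mul_sum,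
    ← Finset.sum_mul]
  rw [heps b d, dAc2 u C b d, s3 d, dAc2 u C d b, s3 b, huw, dEc1 u C hanti2 b,
    dEc2 u C hanti1 d, s9, Esymm u C hpair d b]
  ring

include hanti1 hanti2 hpair in
lemma ucontract_CPt (huw : ∑ x, u x * (eta n).mulVec u x = -1) (b d : Fin n) :
    ∑ a, ∑ c, u a * u c * CPt u C a b c d = 0 := by
  have hx : ∀ a c : Fin n, u a * u c * CPt u C a b c d
      = u a * u c * C a b c d
        + u a * u c * ((eta n).mulVec u a * (Ac u C b c d * 1))
        - u a * (u c * Ac u C a c d) * (eta n).mulVec u b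
        + u a * u c * (Ac u C d a b * ((eta n).mulVec u c * 1))
        - u c * (u a * Ac u C c a b) * (eta n).mulVec u d
        + u a * u c * ((eta n).mulVec u a * ((eta n).mulVec u c * Ec u C b d))
        - u a * (eta n).mulVec u a * (u c * Ec u C b c) * (eta n).mulVec u d
        - u c * (eta n).mulVec u c * (u a * Ec u C a d) * (eta n).mulVec u b
        + u a * (u c * Ec u C a c) * ((eta n).mulVec u b * (eta n).mulVec u d) := by
    intro a c; rw [CPt]; ring
  simp only [hx]
  simp only [Finset.sum_add_distrib, Finset.sum_sub_distrib]
  rw [show (∑ a, ∑ c, u a * u c * C a b c d) = Ec u C b d from rfl]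
  rw [helperFG u ((eta n).mulVec u) (fun c => Ac u C b c d) 1]
  rw [zt3 u C hanti1 d ((eta n).mulVec u b)]
  rw [helperFG u (fun a => Ac u C d a b) ((eta n).mulVec u) 1]
  rw [zt5 u C hanti1 b ((eta n).mulVec u d)]
  rw [helperFG u ((eta n).mulVec u) ((eta n).mulVec u) (Ec u C b d)]
  rw [zt7 u C hanti2 b ((eta n).mulVec u d)]
  rw [zt8 u C hanti1 d ((eta n).mulVec u b)]
  rw [zt9 u C hanti2 ((eta n).mulVec u b * (eta n).mulVec u d)]
  rw [huw, dAc2 u C b d, dAc2 u C d b, Esymm u C hpair d b]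
  ring

include hanti1 hanti2 in
lemma ucontract_Ehat (huw : ∑ x, u x * (eta n).mulVec u x = -1) (b d : Fin n) :
    ∑ a, ∑ c, u a * u c *
      ((eta n).mulVec u a * (eta n).mulVec u c * Ec u C b d
        - (eta n).mulVec u a * (eta n).mulVec u d * Ec u C b c
        - (eta n).mulVec u b * (eta n).mulVec u c * Ec u C a d
        + (eta n).mulVec u b * (eta n).mulVec u d * Ec u C a c) = Ec u C b d := by
  have hx : ∀ a c : Fin n, u a * u c *
      ((eta n).mulVec u a * (eta n).mulVec u c * Ec u C b d
        - (eta n).mulVec u a * (eta n).mulVec u d * Ec u C b c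
        - (eta n).mulVec u b * (eta n).mulVec u c * Ec u C a d
        + (eta n).mulVec u b * (eta n).mulVec u d * Ec u C a c)
      = u a * u c * ((eta n).mulVec u a * ((eta n).mulVec u c * Ec u C b d))
        - u a * (eta n).mulVec u a * (u c * Ec u C b c) * (eta n).mulVec u d
        - u c * (eta n).mulVec u c * (u a * Ec u C a d) * (eta n).mulVec u b
        + u a * (u c * Ec u C a c) * ((eta n).mulVec u b * (eta n).mulVec u d) := by
    intro a c; ring
  simp only [hx]
  simp only [Finset.sum_add_distrib, Finset.sum_sub_distrib]
  rw [helperFG u ((eta n).mulVec u) ((eta n).mulVec u) (Ec u C b d)]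
  rw [zt7 u C hanti2 b ((eta n).mulVec u d)]
  rw [zt8 u C hanti1 d ((eta n).mulVec u b)]
  rw [zt9 u C hanti2 ((eta n).mulVec u b * (eta n).mulVec u d)]
  rw [huw]
  ring

include hanti1 hanti2 hpair in
lemma ucontract_S (huw : ∑ x, u x * (eta n).mulVec u x = -1) (b c d e : Fin n) :
    ∑ a, ∑ f, u a * u f *
      ((eta n).mulVec u a * C b c d e * (eta n).mulVec u f
        + (eta n).mulVec u a * C b c e f * (eta n).mulVec u d
        + (eta n).mulVec u a * C b c f d * (eta n).mulVec u e
        + (eta n).mulVec u b * C c a d e * (eta n).mulVec u f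
        + (eta n).mulVec u b * C c a e f * (eta n).mulVec u d
        + (eta n).mulVec u b * C c a f d * (eta n).mulVec u e
        + (eta n).mulVec u c * C a b d e * (eta n).mulVec u f
        + (eta n).mulVec u c * C a b e f * (eta n).mulVec u d
        + (eta n).mulVec u c * C a b f d * (eta n).mulVec u e)
      = CPt u C b c d e := by
  have hx : ∀ a f : Fin n, u a * u f *
      ((eta n).mulVec u a * C b c d e * (eta n).mulVec u f
        + (eta n).mulVec u a * C b c e f * (eta n).mulVec u d
        + (eta n).mulVec u a * C b c f d * (eta n).mulVec u e
        + (eta n).mulVec u b * C c a d e * (eta n).mulVec u f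
        + (eta n).mulVec u b * C c a e f * (eta n).mulVec u d
        + (eta n).mulVec u b * C c a f d * (eta n).mulVec u e
        + (eta n).mulVec u c * C a b d e * (eta n).mulVec u f
        + (eta n).mulVec u c * C a b e f * (eta n).mulVec u d
        + (eta n).mulVec u c * C a b f d * (eta n).mulVec u e)
      = u a * u f * ((eta n).mulVec u a * ((eta n).mulVec u f * C b c d e))
        + u a * u f * ((eta n).mulVec u a * (C b c e f * (eta n).mulVec u d))
        + u a * u f * ((eta n).mulVec u a * (C b c f d * (eta n).mulVec u e))
        + u a * u f * (C c a d e * ((eta n).mulVec u f * (eta n).mulVec u b))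
        + u a * u f * C c a e f * ((eta n).mulVec u b * (eta n).mulVec u d)
        + u a * u f * C c a f d * ((eta n).mulVec u b * (eta n).mulVec u e)
        + u a * u f * (C a b d e * ((eta n).mulVec u f * (eta n).mulVec u c))
        + u a * u f * C a b e f * ((eta n).mulVec u c * (eta n).mulVec u d)
        + u a * u f * C a b f d * ((eta n).mulVec u c * (eta n).mulVec u e) := by
    intro a f; ring
  simp only [hx]
  simp only [Finset.sum_add_distrib]
  rw [helperFG u ((eta n).mulVec u) ((eta n).mulVec u) (C b c d e)]
  rw [helperFG u ((eta n).mulVec u) (fun f => C b c e f) ((eta n).mulVec u d)]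
  rw [helperFG u ((eta n).mulVec u) (fun f => C b c f d) ((eta n).mulVec u e)]
  rw [helperFG u (fun a => C c a d e) ((eta n).mulVec u) ((eta n).mulVec u b)]
  rw [helperK u (fun a f => C c a e f) ((eta n).mulVec u b * (eta n).mulVec u d)]
  rw [helperK u (fun a f => C c a f d) ((eta n).mulVec u b * (eta n).mulVec u e)]
  rw [helperFG u (fun a => C a b d e) ((eta n).mulVec u) ((eta n).mulVec u c)]
  rw [helperK u (fun a f => C a b e f) ((eta n).mulVec u c * (eta n).mulVec u d)]
  rw [helperK u (fun a f => C a b f d) ((eta n).mulVec u c * (eta n).mulVec u e)]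
  rw [double24 u C hanti1 hanti2 c e, double23 u C hanti1 c d,
    double14 u C hanti2 b e]
  rw [show (∑ a, ∑ f, u a * u f * C a b f d) = Ec u C b d from rfl]
  rw [con4 u C hanti1 hpair b c e, con3 u C hpair b c d, con2 u C hanti1 c d e]
  rw [show (∑ x, u x * C x b d e) = Ac u C b d e from rfl]
  rw [huw, CPt]
  ring

end MainLemmas

/-- Bel–Debever criterion for a purely magnetic Weyl tensor: a trace-free Weyl
candidate `C` is PM with respect to a unit timelike `u` (`θ_u·C = -C`) iff
`u_{[a} C_{bc][de} u_{f]} = 0`, i.e. the sum over the three cyclic permutations of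
`(a,b,c)` and the three cyclic permutations of `(d,e,f)` of `u_{a'} C_{b'c'd'e'} u_{f'}`
vanishes. -/
theorem stmt7 {n : ℕ} (hn : 4 ≤ n)
    (C : Fin n → Fin n → Fin n → Fin n → ℝ)
    (hanti1 : ∀ a b c d, C b a c d = -C a b c d)
    (hanti2 : ∀ a b c d, C a b d c = -C a b c d)
    (hpair : ∀ a b c d, C c d a b = C a b c d)
    (hbianchi : ∀ a b c d, C a b c d + C a c d b + C a d b c = 0)
    (htracefree : ∀ b d, ∑ a, ∑ c, eta n a c * C a b c d = 0)
    (u : Fin n → ℝ) (hu : u ⬝ᵥ (eta n).mulVec u = -1) :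
    pull (theta u) C = (fun a b c d => -(C a b c d)) ↔
      ∀ a b c d e f,
        ((eta n).mulVec u a) * C b c d e * ((eta n).mulVec u f)
        + ((eta n).mulVec u a) * C b c e f * ((eta n).mulVec u d)
        + ((eta n).mulVec u a) * C b c f d * ((eta n).mulVec u e)
        + ((eta n).mulVec u b) * C c a d e * ((eta n).mulVec u f)
        + ((eta n).mulVec u b) * C c a e f * ((eta n).mulVec u d)
        + ((eta n).mulVec u b) * C c a f d * ((eta n).mulVec u e)
        + ((eta n).mulVec u c) * C a b d e * ((eta n).mulVec u f)
        + ((eta n).mulVec u c) * C a b e f * ((eta n).mulVec u d)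
        + ((eta n).mulVec u c) * C a b f d * ((eta n).mulVec u e) = 0 := by
  have huw : ∑ x, u x * (eta n).mulVec u x = -1 := by
    simpa [dotProduct] using hu
  constructor
  · intro hPM
    have hPM' : ∀ a b c d, pull (theta u) C a b c d = -(C a b c d) := fun a b c d =>
      congrFun (congrFun (congrFun (congrFun hPM a) b) c) d
    have hCPE : ∀ a b c d, CPt u C a b c d
        = -((eta n).mulVec u a * (eta n).mulVec u c * Ec u C b d
            - (eta n).mulVec u a * (eta n).mulVec u d * Ec u C b c
            - (eta n).mulVec u b * (eta n).mulVec u c * Ec u C a d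
            + (eta n).mulVec u b * (eta n).mulVec u d * Ec u C a c) := by
      intro a b c d
      have h := hPM' a b c d
      rw [pull_theta u C hanti1 hanti2 hpair a b c d] at h
      linarith
    have hE0 : ∀ b d, Ec u C b d = 0 := by
      intro b d
      have h1 := ucontract_CPt u C hanti1 hanti2 hpair huw b d
      have h2 := ucontract_Ehat u C hanti1 hanti2 huw b d
      have h3 : ∑ a, ∑ c, u a * u c * CPt u C a b c d
          = -∑ a, ∑ c, u a * u c *
            ((eta n).mulVec u a * (eta n).mulVec u c * Ec u C b d
              - (eta n).mulVec u a * (eta n).mulVec u d * Ec u C b c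
              - (eta n).mulVec u b * (eta n).mulVec u c * Ec u C a d
              + (eta n).mulVec u b * (eta n).mulVec u d * Ec u C a c) := by
        rw [← Finset.sum_neg_distrib]
        refine Finset.sum_congr rfl fun a _ => ?_
        rw [← Finset.sum_neg_distrib]
        refine Finset.sum_congr rfl fun c _ => ?_
        rw [hCPE a b c d]; ring
      rw [h1, h2] at h3
      linarith
    have hCPt0 : ∀ a b c d, CPt u C a b c d = 0 := by
      intro a b c d
      rw [hCPE a b c d, hE0, hE0, hE0, hE0]
      ring
    have hC : ∀ a b c d, C a b c d
        = -((eta n).mulVec u a * Ac u C b c d) + (eta n).mulVec u b * Ac u C a c d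
          - (eta n).mulVec u c * Ac u C d a b + (eta n).mulVec u d * Ac u C c a b := by
      intro a b c d
      have h := hCPt0 a b c d
      rw [CPt, hE0, hE0, hE0, hE0] at h
      linarith
    intro a b c d e f
    rw [hC b c d e, hC b c e f, hC b c f d, hC c a d e, hC c a e f, hC c a f d,
      hC a b d e, hC a b e f, hC a b f d]
    ring
  · intro hS
    have hCPt0 : ∀ b c d e, CPt u C b c d e = 0 := by
      intro b c d e
      rw [← ucontract_S u C hanti1 hanti2 hpair huw b c d e]
      simp only [hS, mul_zero, Finset.sum_const_zero]
    have hE0 : ∀ b d, Ec u C b d = 0 := by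
      intro b d
      rw [← trace_CPt u C hanti1 hanti2 hpair htracefree huw b d]
      simp only [hCPt0, mul_zero, Finset.sum_const_zero]
    funext a b c d
    rw [pull_theta u C hanti1 hanti2 hpair a b c d, hCPt0, hE0, hE0, hE0, hE0]
    ring

end
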